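/- Let 0 ≤ S ≤ T be positive operators on a real Banach lattice with T ideal irreducible. If T*x₀* = λx₀* for some x₀* > 0 and Sx₀ ≥ λx₀ for some x₀ > 0, then T = S. -/

import Mathlib

open scoped ENNReal

variable {X : Type*}

def IsPositiveOp [NormedAddCommGroup X] [Lattice X] [HasSolidNorm X] [IsOrderedAddMonoid X] [NormedSpace ℝ X]
    (T : X →L[ℝ] X) : Prop := ∀ x : X, 0 ≤ x → 0 ≤ T x

def IsClosedIdeal [NormedAddCommGroup X] [Lattice X] [HasSolidNorm X] [IsOrderedAddMonoid X] [NormedSpace ℝ X]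
    (J : Submodule ℝ X) : Prop :=
  IsClosed (J : Set X) ∧ ∀ x y : X, |y| ≤ |x| → x ∈ J → y ∈ J

def IdealIrreducible [NormedAddCommGroup X] [Lattice X] [HasSolidNorm X] [IsOrderedAddMonoid X] [NormedSpace ℝ X]
    (T : X →L[ℝ] X) : Prop :=
  ∀ J : Submodule ℝ X, IsClosedIdeal J → (∀ x ∈ J, T x ∈ J) → J = ⊥ ∨ J = ⊤

/-- A band: a solid submodule closed under existing suprema. -/
def IsBand [NormedAddCommGroup X] [Lattice X] [HasSolidNorm X] [IsOrderedAddMonoid X] [NormedSpace ℝ X]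
    (J : Submodule ℝ X) : Prop :=
  (∀ x y : X, |y| ≤ |x| → x ∈ J → y ∈ J) ∧
    ∀ (A : Set X) (x : X), A ⊆ (J : Set X) → IsLUB A x → x ∈ J

def BandIrreducible [NormedAddCommGroup X] [Lattice X] [HasSolidNorm X] [IsOrderedAddMonoid X] [NormedSpace ℝ X]
    (T : X →L[ℝ] X) : Prop :=
  ∀ J : Submodule ℝ X, IsBand J → (∀ x ∈ J, T x ∈ J) → J = ⊥ ∨ J = ⊤

def QuasiInterior [NormedAddCommGroup X] [Lattice X] [HasSolidNorm X] [IsOrderedAddMonoid X] [NormedSpace ℝ X]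
    (x : X) : Prop :=
  closure {y : X | ∃ c : ℝ, |y| ≤ c • x} = Set.univ

/-- A weak (order) unit. -/
def WeakUnit [NormedAddCommGroup X] [Lattice X] [HasSolidNorm X] [IsOrderedAddMonoid X] [NormedSpace ℝ X]
    (x : X) : Prop := 0 < x ∧ ∀ y : X, |y| ⊓ x = 0 → y = 0

def IsPositiveFunc [NormedAddCommGroup X] [Lattice X] [HasSolidNorm X] [IsOrderedAddMonoid X] [NormedSpace ℝ X]
    (f : StrongDual ℝ X) : Prop := ∀ x : X, 0 ≤ x → 0 ≤ f x

def StrictlyPositiveFunc [NormedAddCommGroup X] [Lattice X] [HasSolidNorm X] [IsOrderedAddMonoid X] [NormedSpace ℝ X]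
    (f : StrongDual ℝ X) : Prop := ∀ x : X, 0 < x → 0 < f x

noncomputable def adjOp [NormedAddCommGroup X] [Lattice X] [HasSolidNorm X] [IsOrderedAddMonoid X] [NormedSpace ℝ X]
    (T : X →L[ℝ] X) : StrongDual ℝ X →L[ℝ] StrongDual ℝ X :=
  (ContinuousLinearMap.compL ℝ X X ℝ).flip T

/-- `T` is σ-order continuous: `x_n ↓ 0` implies `T x_n ↓ 0`. -/
def SigmaOrderContinuousOp [NormedAddCommGroup X] [Lattice X] [HasSolidNorm X] [IsOrderedAddMonoid X] [NormedSpace ℝ X]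
    (T : X →L[ℝ] X) : Prop :=
  ∀ u : ℕ → X, Antitone u → IsGLB (Set.range u) 0 →
    IsGLB (Set.range fun n => T (u n)) 0

/-- A σ-order continuous functional. -/
def SigmaOrderContinuousFunc [NormedAddCommGroup X] [Lattice X] [HasSolidNorm X] [IsOrderedAddMonoid X] [NormedSpace ℝ X]
    (f : StrongDual ℝ X) : Prop :=
  ∀ u : ℕ → X, Antitone u → IsGLB (Set.range u) 0 →
    Filter.Tendsto (fun n => f (u n)) Filter.atTop (nhds 0)

/-- A set is relatively weakly compact. -/
def RelWeaklyCompact [NormedAddCommGroup X] [Lattice X] [HasSolidNorm X] [IsOrderedAddMonoid X] [NormedSpace ℝ X]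
    (s : Set X) : Prop :=
  IsCompact (closure ((toWeakSpace ℝ X) '' s))

/-- `T` is order weakly compact: `T[0,x]` is relatively weakly compact for all `x > 0`. -/
def OrderWeaklyCompactOp [NormedAddCommGroup X] [Lattice X] [HasSolidNorm X] [IsOrderedAddMonoid X] [NormedSpace ℝ X]
    (T : X →L[ℝ] X) : Prop :=
  ∀ x : X, 0 < x → RelWeaklyCompact (T '' Set.Icc 0 x)

/-!
The eigenfunctional `f₀` of `T*` is strictly positive: its null ideal `{z | f₀ |z| = 0}` is a
closed `T`-invariant ideal, which cannot be all of `X` since `f₀ ≠ 0`. Hence `T x₀ - λ x₀ ≥ 0`,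
on which `f₀` vanishes, is zero, and so `T x₀ = S x₀ = λ x₀`. The closure of the principal ideal of
`x₀` is then a nonzero closed `T`-invariant ideal, so that principal ideal is dense. The positive
functional `f₀ ∘ (T - S)` vanishes at `x₀`, hence on the principal ideal of `x₀`, hence everywhere,
and strict positivity of `f₀` forces `T x = S x` for all `x ≥ 0`.
-/

open Filter Topology LatticeOrderedAddCommGroup

lemma nonneg_of_two_pow_nsmul_nonneg {α : Type*} [Lattice α] [AddCommGroup α]
    [IsOrderedAddMonoid α] {a : α} : ∀ m : ℕ, 0 ≤ 2 ^ m • a → 0 ≤ a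
  | 0, h => by simpa using h
  | m + 1, h => nonneg_of_two_pow_nsmul_nonneg m <| nsmul_two_semiclosed <| by
      rwa [← mul_nsmul, ← pow_succ]

section VectorLattice

variable {E : Type*} [Lattice E] [AddCommGroup E] [Module ℝ E]

lemma abs_smul_le [PosSMulMono ℝ E] (c : ℝ) (x : E) : |c • x| ≤ |c| • |x| := by
  have key : ∀ z : E, c • z ≤ |c| • |z| := fun z => by
    rcases le_or_gt 0 c with hc | hc
    · rw [abs_of_nonneg hc]
      exact smul_le_smul_of_nonneg_left (le_abs_self z) hc
    · rw [abs_of_neg hc, ← neg_smul_neg]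
      exact smul_le_smul_of_nonneg_left (neg_le_abs z) (neg_nonneg.2 hc.le)
  exact abs_le'.2 ⟨key x, by simpa [smul_neg] using key (-x)⟩

variable [IsOrderedAddMonoid E]

lemma inv_two_pow_smul_nonneg {x : E} (hx : 0 ≤ x) (m : ℕ) : 0 ≤ ((2 : ℝ) ^ m)⁻¹ • x :=
  nonneg_of_two_pow_nsmul_nonneg m <| by
    rwa [← Nat.cast_smul_eq_nsmul ℝ, smul_smul, Nat.cast_pow, Nat.cast_ofNat,
      mul_inv_cancel₀ (by positivity), one_smul]

lemma LinearMap.ext_nonneg {F : Type*} [AddCommGroup F] [Module ℝ F] {T S : E →ₗ[ℝ] F}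
    (h : ∀ x, 0 ≤ x → T x = S x) : T = S :=
  LinearMap.ext fun x => by
    rw [← posPart_sub_negPart x, map_sub, map_sub, h _ (posPart_nonneg x),
      h _ (negPart_nonneg x)]

variable [PosSMulMono ℝ E]

def principalIdeal (x₀ : E) : Submodule ℝ E where
  carrier := {y | ∃ c : ℝ, |y| ≤ c • x₀}
  add_mem' := by
    rintro a b ⟨ca, hca⟩ ⟨cb, hcb⟩
    exact ⟨ca + cb, (abs_add_le a b).trans (add_smul ca cb x₀ ▸ add_le_add hca hcb)⟩
  zero_mem' := ⟨0, by simp⟩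
  smul_mem' := by
    rintro c a ⟨ca, hca⟩
    refine ⟨|c| * ca, (abs_smul_le c a).trans ?_⟩
    rw [mul_smul]
    exact smul_le_smul_of_nonneg_left hca (abs_nonneg c)

lemma isSolid_principalIdeal (x₀ : E) : IsSolid (principalIdeal x₀ : Set E) :=
  fun _ ⟨c, hc⟩ _ hyx => ⟨c, hyx.trans hc⟩

lemma self_mem_principalIdeal {x₀ : E} (hx₀ : 0 ≤ x₀) : x₀ ∈ principalIdeal x₀ :=
  ⟨1, by rw [abs_of_nonneg hx₀, one_smul]⟩

end VectorLattice

section NormedLattice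

variable [NormedAddCommGroup X] [Lattice X] [HasSolidNorm X] [IsOrderedAddMonoid X]

lemma HasSolidNorm.continuous_abs : Continuous fun x : X => |x| :=
  continuous_id.sup continuous_neg

/-- Clamping `z ↦ (b ⊓ |z|) ⊔ -|z|` is continuous, maps `s` into `s` and sends `a` to `b`. -/
lemma LatticeOrderedAddCommGroup.IsSolid.closure {s : Set X} (hs : IsSolid s) :
    IsSolid (closure s) := by
  intro a ha b hba
  have hclamp : Continuous fun z : X => b ⊓ |z| ⊔ -|z| :=
    (continuous_const.inf HasSolidNorm.continuous_abs).sup HasSolidNorm.continuous_abs.neg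
  have hb : b ⊓ |a| ⊔ -|a| = b := by
    rw [inf_eq_left.2 ((le_abs_self b).trans hba),
      sup_eq_left.2 ((neg_le_neg hba).trans (neg_le.1 (neg_le_abs b)))]
  have hmaps : ∀ z ∈ s, b ⊓ |z| ⊔ -|z| ∈ s := fun z hz => hs hz <| abs_le'.2
    ⟨sup_le inf_le_right ((neg_le.1 (neg_le_abs z)).trans (le_abs_self z)), neg_le.2 le_sup_right⟩
  simpa only [hb] using map_mem_closure hclamp ha hmaps

variable [NormedSpace ℝ X]

/-- The positive cone is closed, and `c • x` is the limit of `⌊c 2^m⌋ • (2^-m • x)`. -/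
instance HasSolidNorm.posSMulMono : PosSMulMono ℝ X where
  smul_le_smul_of_nonneg_left c hc x y hxy := by
    rw [← sub_nonneg, ← smul_sub]
    have hq : Tendsto (fun m : ℕ => (⌊c * 2 ^ m⌋₊ : ℝ) / 2 ^ m) atTop (𝓝 c) :=
      (tendsto_nat_floor_mul_div_atTop hc).comp (tendsto_pow_atTop_atTop_of_one_lt one_lt_two)
    refine ge_of_tendsto' (hq.smul_const (y - x)) fun m => ?_
    rw [div_eq_mul_inv, ← smul_smul, Nat.cast_smul_eq_nsmul]
    exact nsmul_nonneg (inv_two_pow_smul_nonneg (sub_nonneg.2 hxy) m) _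

lemma isClosedIdeal_topologicalClosure {J : Submodule ℝ X} (hJ : IsSolid (J : Set X)) :
    IsClosedIdeal J.topologicalClosure :=
  ⟨J.isClosed_topologicalClosure, fun _ _ hyx hx => hJ.closure hx hyx⟩

@[simp]
lemma adjOp_apply (T : X →L[ℝ] X) (f : StrongDual ℝ X) (x : X) : adjOp T f x = f (T x) := rfl

lemma IsPositiveOp.monotone {T : X →L[ℝ] X} (hT : IsPositiveOp T) : Monotone T :=
  fun a b h => by simpa using hT (b - a) (sub_nonneg.2 h)

lemma IsPositiveOp.abs_apply_le {T : X →L[ℝ] X} (hT : IsPositiveOp T) (y : X) :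
    |T y| ≤ T |y| :=
  abs_le'.2 ⟨hT.monotone (le_abs_self y), by simpa using hT.monotone (neg_le_abs y)⟩

section PositiveFunc

variable {f : StrongDual ℝ X}

lemma IsPositiveFunc.monotone (hf : IsPositiveFunc f) : Monotone f :=
  fun a b h => by simpa using hf (b - a) (sub_nonneg.2 h)

lemma IsPositiveFunc.apply_eq_zero_of_abs (hf : IsPositiveFunc f) {y : X} (h : f |y| = 0) :
    f y = 0 := by
  have h₁ := hf.monotone (le_abs_self y)
  have h₂ := hf.monotone (neg_le_abs y)
  rw [map_neg] at h₂
  linarith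

lemma IsPositiveFunc.apply_abs_eq_zero_of_abs_le (hf : IsPositiveFunc f) {x y : X}
    (hyx : |y| ≤ x) (hx : f x = 0) : f |y| = 0 :=
  le_antisymm (hx ▸ hf.monotone hyx) (hf _ (abs_nonneg y))

def IsPositiveFunc.nullIdeal (hf : IsPositiveFunc f) : Submodule ℝ X where
  carrier := {z | f |z| = 0}
  add_mem' {a b} ha hb := hf.apply_abs_eq_zero_of_abs_le (abs_add_le a b) <| by
    rw [map_add, ha, hb, add_zero]
  zero_mem' := by simp
  smul_mem' c a ha := hf.apply_abs_eq_zero_of_abs_le (abs_smul_le c a) <| by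
    rw [map_smul, ha, smul_zero]

lemma IsPositiveFunc.mem_nullIdeal (hf : IsPositiveFunc f) {z : X} :
    z ∈ hf.nullIdeal ↔ f |z| = 0 :=
  Iff.rfl

lemma IsPositiveFunc.isClosedIdeal_nullIdeal (hf : IsPositiveFunc f) :
    IsClosedIdeal hf.nullIdeal :=
  ⟨isClosed_eq (f.continuous.comp HasSolidNorm.continuous_abs) continuous_const,
    fun _ _ hyx hx => hf.apply_abs_eq_zero_of_abs_le hyx hx⟩

lemma IsPositiveFunc.eq_zero_of_dense_principalIdeal (hf : IsPositiveFunc f) {x₀ : X}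
    (hd : Dense (principalIdeal x₀ : Set X)) (hfx₀ : f x₀ = 0) : f = 0 := by
  have hI : Set.EqOn f 0 (principalIdeal x₀) := fun _ ⟨c, hc⟩ =>
    hf.apply_eq_zero_of_abs (hf.apply_abs_eq_zero_of_abs_le hc (by rw [map_smul, hfx₀, smul_zero]))
  exact DFunLike.coe_injective (Continuous.ext_on hd f.continuous continuous_const hI)

end PositiveFunc

lemma StrictlyPositiveFunc.eq_of_le_of_apply_eq {f : StrongDual ℝ X}
    (hf : StrictlyPositiveFunc f) {x y : X} (hxy : x ≤ y) (h : f x = f y) : x = y := by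
  by_contra hne
  have := hf (y - x) (sub_pos.2 (hxy.lt_of_ne hne))
  rw [map_sub, h, sub_self] at this
  exact this.false

variable {T : X →L[ℝ] X}

lemma IdealIrreducible.strictlyPositiveFunc (hirr : IdealIrreducible T) (hT : IsPositiveOp T)
    {f : StrongDual ℝ X} (hf : IsPositiveFunc f) (hf0 : f ≠ 0) {l : ℝ}
    (heig : adjOp T f = l • f) : StrictlyPositiveFunc f := by
  have hinv : ∀ z ∈ hf.nullIdeal, T z ∈ hf.nullIdeal := fun z hz =>
    hf.apply_abs_eq_zero_of_abs_le (hT.abs_apply_le z) <| by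
      simpa [hf.mem_nullIdeal.1 hz] using congr($heig |z|)
  intro x hx
  refine (hf x hx.le).lt_of_ne' fun hfx => ?_
  rcases hirr _ hf.isClosedIdeal_nullIdeal hinv with hbot | htop
  · have hxN : x ∈ hf.nullIdeal := by rwa [hf.mem_nullIdeal, abs_of_nonneg hx.le]
    rw [hbot, Submodule.mem_bot] at hxN
    exact hx.ne' hxN
  · refine hf0 (ContinuousLinearMap.ext fun z => hf.apply_eq_zero_of_abs ?_)
    exact hf.mem_nullIdeal.1 (htop ▸ Submodule.mem_top)

lemma IdealIrreducible.dense_principalIdeal (hirr : IdealIrreducible T) (hT : IsPositiveOp T)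
    {x₀ : X} (hx₀ : 0 < x₀) {l : ℝ} (hTx₀ : T x₀ = l • x₀) :
    Dense (principalIdeal x₀ : Set X) := by
  have hinv : ∀ y ∈ principalIdeal x₀, T y ∈ principalIdeal x₀ := fun y ⟨c, hc⟩ =>
    ⟨c * l, calc |T y| ≤ T |y| := hT.abs_apply_le y
      _ ≤ T (c • x₀) := hT.monotone hc
      _ = (c * l) • x₀ := by rw [map_smul, hTx₀, smul_smul]⟩
  have hinvClosure : ∀ y ∈ (principalIdeal x₀).topologicalClosure,
      T y ∈ (principalIdeal x₀).topologicalClosure := fun _ hy =>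
    map_mem_closure T.continuous hy hinv
  rw [Submodule.dense_iff_topologicalClosure_eq_top]
  refine (hirr _ (isClosedIdeal_topologicalClosure (isSolid_principalIdeal x₀))
    hinvClosure).resolve_left fun hbot => hx₀.ne' ?_
  simpa [hbot] using (principalIdeal x₀).le_topologicalClosure (self_mem_principalIdeal hx₀.le)

end NormedLattice

theorem stmt15_general [NormedAddCommGroup X] [Lattice X] [HasSolidNorm X] [IsOrderedAddMonoid X] [NormedSpace ℝ X]
    (S T : X →L[ℝ] X)
    (hST : ∀ x : X, 0 ≤ x → S x ≤ T x) (hT : IsPositiveOp T)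
    (hirr : IdealIrreducible T)
    (l : ℝ) (f₀ : StrongDual ℝ X) (hf₀ : IsPositiveFunc f₀) (hf₀0 : f₀ ≠ 0)
    (heig : adjOp T f₀ = l • f₀)
    (x₀ : X) (hx₀ : 0 < x₀) (hge : l • x₀ ≤ S x₀) :
    T = S := by
  have hf : StrictlyPositiveFunc f₀ := hirr.strictlyPositiveFunc hT hf₀ hf₀0 heig
  have hTx₀ : T x₀ = l • x₀ := by
    refine (hf.eq_of_le_of_apply_eq (hge.trans (hST x₀ hx₀.le)) ?_).symm
    simpa using congr($heig x₀).symm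
  have hSx₀ : S x₀ = l • x₀ := le_antisymm (hTx₀ ▸ hST x₀ hx₀.le) hge
  have hgap : IsPositiveFunc (f₀.comp (T - S)) := fun x hx => hf₀ _ (sub_nonneg.2 (hST x hx))
  have hgap0 : f₀.comp (T - S) = 0 :=
    hgap.eq_zero_of_dense_principalIdeal (hirr.dense_principalIdeal hT hx₀ hTx₀)
      (by simp [hTx₀, hSx₀])
  refine ContinuousLinearMap.coe_injective <| LinearMap.ext_nonneg fun x hx =>
    (hf.eq_of_le_of_apply_eq (hST x hx) ?_).symm
  exact (sub_eq_zero.1 (by simpa using congr($hgap0 x))).symm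

theorem stmt15 [NormedAddCommGroup X] [Lattice X] [HasSolidNorm X] [IsOrderedAddMonoid X] [NormedSpace ℝ X]
    (hdim : 1 < Module.rank ℝ X)
    (S T : X →L[ℝ] X) (hS : IsPositiveOp S)
    (hST : ∀ x : X, 0 ≤ x → S x ≤ T x) (hT : IsPositiveOp T)
    (hirr : IdealIrreducible T)
    (l : ℝ) (f₀ : StrongDual ℝ X) (hf₀ : IsPositiveFunc f₀) (hf₀0 : f₀ ≠ 0)
    (heig : adjOp T f₀ = l • f₀)
    (x₀ : X) (hx₀ : 0 < x₀) (hge : l • x₀ ≤ S x₀) :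
    T = S :=
  stmt15_general S T hST hT hirr l f₀ hf₀ hf₀0 heig x₀ hx₀ hge
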